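/- Fix k ≥ 1, m ≥ 1, a partition μ of k, a permutation w_μ ∈ S_k of cycle type μ, and an index i with 1 ≤ i ≤ m−1. Let G_μ(p_1,…,p_m; q_1,…,q_m) = Σ_{(α,β): α w_μ = β} p^{κ(α)} q^{κ(β)}, summed over all pairs of m-colored permutations α, β ∈ S_k^{(m)} with α w_μ = β, where p^{κ(α)} = Π_j p_j^{κ_j(α)} and κ_j(α) is the number of cycles of α colored j, and similarly for q^{κ(β)}. Then substituting q_{i+1} = q_i in G_μ yields G_μ(p_1,…,p_{i-1}, p_i + p_{i+1}, p_{i+2},…,p_m; q_1,…,q_{i-1}, q_i, q_{i+2},…,q_m), the same polynomial G for m−1 colors with p_i and p_{i+1} merged into p_i + p_{i+1} and q_{i+1} deleted. -/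

import Mathlib

open Equiv Finset

/-- `S_k^{(m)}`: the set of `m`-colored permutations of `{1,…,k}`, i.e. permutations
`u ∈ S_k` together with a color in `{1,…,m}` for each cycle of `u` (fixed points count
as cycles). We encode the coloring of cycles as a function on points that is constant
on each cycle of `u`. -/
abbrev ColoredPerm (k m : ℕ) :=
  {x : Equiv.Perm (Fin k) × (Fin k → Fin m) // ∀ a, x.2 (x.1 a) = x.2 a}

/-- `κ_j(α)`: the number of cycles of the colored permutation `α` colored `j`,
computed as the number of points that are minimal in their cycle and colored `j`. -/
noncomputable def kappaC {k m : ℕ} (j : Fin m) (α : ColoredPerm k m) : ℕ :=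
  Nat.card {x : Fin k // (∀ y, α.1.1.SameCycle x y → x ≤ y) ∧ α.1.2 x = j}

/-- The product `α v` of a colored permutation `α = (u, φ) ∈ S_k^{(m)}` with `v ∈ S_k`:
the underlying permutation is `w = u v`, and a cycle `τ` of `w` receives color
`max {φ(ρ) : ρ` a cycle of `u` meeting `τ}`. -/
def cmul {k m : ℕ} (α : ColoredPerm k m) (v : Equiv.Perm (Fin k)) : ColoredPerm k m :=
  ⟨(α.1.1 * v, fun x =>
      (Finset.univ.filter fun y => (α.1.1 * v).SameCycle x y).sup'
        ⟨x, by simp [Equiv.Perm.SameCycle.refl]⟩ α.1.2), by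
    intro a
    dsimp only
    refine Finset.sup'_congr _ ?_ fun _ _ => rfl
    apply Finset.filter_congr
    intro y _
    exact Equiv.Perm.sameCycle_apply_left⟩

/-- The generating function `G_μ(p₁,…,p_m;q₁,…,q_m) = ∑_{α w_μ = β} p^{κ(α)} q^{κ(β)}`,
summed over all pairs `(α,β) ∈ S_k^{(m)} × S_k^{(m)}` with `α w_μ = β` (equivalently,
over all `α`, with `β = α w_μ`), where `p^{κ(α)} = ∏_j p_j^{κ_j(α)}`. -/
noncomputable def Gfun (k m : ℕ) (w : Equiv.Perm (Fin k)) (p q : Fin m → ℤ) : ℤ :=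
  ∑ α : ColoredPerm k m,
    (∏ j : Fin m, p j ^ kappaC j α) * ∏ j : Fin m, q j ^ kappaC j (cmul α w)

/-!
Recoloring a colored permutation by a monotone map of colors `f` commutes with the
product by `w`, because `f` commutes with `max`. So if `q` factors as `q' ∘ f`, the
`q`-weight of `α w` depends only on the recolored `α`, and summing the `p`-weights over
a fiber of recoloring amounts to choosing, independently for each cycle, a color in the
preimage of its color: this replaces `p` by its pushforward `j ↦ ∑_{f c = j} p c`.
Merging colors `i` and `i + 1` is the case `f = Fin.predAbove i`.
-/

namespace Fin

theorem val_predAbove {n : ℕ} (p : Fin n) (c : Fin (n + 1)) :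
    (p.predAbove c : ℕ) = if c.val ≤ p.val then c.val else c.val - 1 := by
  unfold predAbove
  split_ifs with h <;> rw [lt_def, val_castSucc] at h <;> simp <;> omega

theorem sum_filter_predAbove_eq {n : ℕ} {M : Type*} [AddCommMonoid M] (p j : Fin n)
    (f : Fin (n + 1) → M) :
    ∑ c with p.predAbove c = j, f c =
      if j.val < p.val then f j.castSucc
      else if j.val = p.val then f j.castSucc + f j.succ else f j.succ := by
  have hfiber : ({c | p.predAbove c = j} : Finset (Fin (n + 1))) =
      if j.val < p.val then {j.castSucc}
      else if j.val = p.val then {j.castSucc, j.succ} else {j.succ} := by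
    ext c
    simp only [mem_filter, mem_univ, true_and, Fin.ext_iff, val_predAbove]
    split_ifs <;> simp [Fin.ext_iff] <;> omega
  rw [hfiber]
  split_ifs <;> simp [sum_pair castSucc_lt_succ.ne]

theorem comp_predAbove_eq {n : ℕ} {α : Type*} (p : Fin n) (q : Fin (n + 1) → α)
    (hq : q p.succ = q p.castSucc) :
    (fun j : Fin n => if j.val ≤ p.val then q j.castSucc else q j.succ) ∘ p.predAbove = q := by
  funext c
  by_cases hc : c = p.succ
  · simp [hc, hq]
  · have hne : c.val ≠ p.val + 1 := fun h => hc (Fin.ext h)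
    have hv := val_predAbove p c
    simp only [Function.comp_apply]
    split_ifs at hv ⊢ <;> congr 1 <;> ext <;> simp <;> omega

end Fin

namespace Equiv.Perm

variable {α : Type*} [Fintype α] [LinearOrder α]

noncomputable def cycleMin (u : Perm α) (x : α) : α :=
  (univ.filter (u.SameCycle x)).min' ⟨x, mem_filter.2 ⟨mem_univ x, .refl u x⟩⟩

def cycleMins (u : Perm α) : Finset α :=
  {x | ∀ y, u.SameCycle x y → x ≤ y}

lemma sameCycle_cycleMin (u : Perm α) (x : α) : u.SameCycle x (u.cycleMin x) :=
  (mem_filter.1 (min'_mem _ _)).2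

lemma cycleMin_le {u : Perm α} {x y : α} (h : u.SameCycle x y) : u.cycleMin x ≤ y :=
  min'_le _ _ (mem_filter.2 ⟨mem_univ y, h⟩)

lemma SameCycle.cycleMin_eq {u : Perm α} {x y : α} (h : u.SameCycle x y) :
    u.cycleMin x = u.cycleMin y :=
  le_antisymm (cycleMin_le (h.trans (u.sameCycle_cycleMin y)))
    (cycleMin_le (h.symm.trans (u.sameCycle_cycleMin x)))

lemma cycleMin_apply (u : Perm α) (x : α) : u.cycleMin (u x) = u.cycleMin x :=
  (sameCycle_apply_left.2 (SameCycle.refl u x)).cycleMin_eq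

lemma cycleMin_mem_cycleMins (u : Perm α) (x : α) : u.cycleMin x ∈ u.cycleMins :=
  mem_filter.2 ⟨mem_univ _, fun _ h => cycleMin_le ((u.sameCycle_cycleMin x).trans h)⟩

lemma cycleMin_eq_self {u : Perm α} {x : α} (hx : x ∈ u.cycleMins) : u.cycleMin x = x :=
  le_antisymm (cycleMin_le (SameCycle.refl u x)) ((mem_filter.1 hx).2 _ (u.sameCycle_cycleMin x))

end Equiv.Perm

namespace ColoredPerm

open Equiv.Perm

variable {k m n : ℕ}

lemma color_eq_of_sameCycle (α : ColoredPerm k m) {x y : Fin k} (h : α.1.1.SameCycle x y) :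
    α.1.2 x = α.1.2 y := by
  obtain ⟨n, -, rfl⟩ := h.exists_pow_eq'
  clear h
  induction n with
  | zero => rfl
  | succ n ih => rw [pow_succ', Equiv.Perm.mul_apply, α.2]; exact ih

lemma color_cycleMin (α : ColoredPerm k m) (x : Fin k) : α.1.2 (α.1.1.cycleMin x) = α.1.2 x :=
  (α.color_eq_of_sameCycle (α.1.1.sameCycle_cycleMin x)).symm

lemma kappaC_eq_card (j : Fin m) (α : ColoredPerm k m) :
    kappaC j α = #{x ∈ α.1.1.cycleMins | α.1.2 x = j} := by
  rw [kappaC, Nat.card_eq_fintype_card, Fintype.card_subtype, cycleMins, filter_filter]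
  congr

def weight {R : Type*} [CommMonoid R] (p : Fin m → R) (α : ColoredPerm k m) : R :=
  ∏ x ∈ α.1.1.cycleMins, p (α.1.2 x)

lemma prod_pow_kappaC {R : Type*} [CommMonoid R] (p : Fin m → R) (α : ColoredPerm k m) :
    ∏ j, p j ^ kappaC j α = α.weight p := by
  simp_rw [weight, kappaC_eq_card, ← prod_const, prod_fiberwise' _ _ p]

def recolor (f : Fin m → Fin n) (α : ColoredPerm k m) : ColoredPerm k n :=
  ⟨(α.1.1, f ∘ α.1.2), fun a => congrArg f (α.2 a)⟩

lemma weight_recolor {R : Type*} [CommMonoid R] (f : Fin m → Fin n) (q : Fin n → R)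
    (α : ColoredPerm k m) : (α.recolor f).weight q = α.weight (q ∘ f) :=
  rfl

lemma recolor_cmul {f : Fin m → Fin n} (hf : Monotone f) (α : ColoredPerm k m)
    (v : Equiv.Perm (Fin k)) : (cmul α v).recolor f = cmul (α.recolor f) v :=
  Subtype.ext <| Prod.ext rfl <| funext fun x =>
    apply_sup'_eq_sup'_comp ⟨x, mem_filter.2 ⟨mem_univ x, .refl _ x⟩⟩ f hf.map_sup

noncomputable def ofCycleMins (u : Equiv.Perm (Fin k)) (g : u.cycleMins → Fin m) :
    ColoredPerm k m :=
  ⟨(u, fun x => g ⟨u.cycleMin x, u.cycleMin_mem_cycleMins x⟩),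
    fun a => congrArg g (Subtype.ext (u.cycleMin_apply a))⟩

lemma sum_weight_recolor_eq {R : Type*} [CommSemiring R] (f : Fin m → Fin n) (p : Fin m → R)
    (β : ColoredPerm k n) :
    ∑ α : ColoredPerm k m with α.recolor f = β, α.weight p =
      β.weight fun j => ∑ c with f c = j, p c := by
  calc ∑ α : ColoredPerm k m with α.recolor f = β, α.weight p
      -- a coloring in the fiber is determined by the colors of the cycle minima
      = ∑ g ∈ Fintype.piFinset fun x : β.1.1.cycleMins => {c | f c = β.1.2 x}, ∏ x, p (g x) := by
        refine sum_nbij' (fun α x => α.1.2 x) (ofCycleMins β.1.1) ?_ ?_ ?_ ?_ ?_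
        · rintro α hα
          obtain rfl := (mem_filter.1 hα).2
          exact Fintype.mem_piFinset.2 fun x => mem_filter.2 ⟨mem_univ _, rfl⟩
        · intro g hg
          refine mem_filter.2 ⟨mem_univ _, Subtype.ext (Prod.ext rfl (funext fun x => ?_))⟩
          rw [← β.color_cycleMin x]
          exact mem_filter.1 (Fintype.mem_piFinset.1 hg ⟨_, _⟩) |>.2
        · rintro α hα
          obtain rfl := (mem_filter.1 hα).2
          exact Subtype.ext (Prod.ext rfl (funext α.color_cycleMin))
        · intro g _
          exact funext fun x => congrArg g (Subtype.ext (cycleMin_eq_self x.2))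
        · rintro α hα
          obtain rfl := (mem_filter.1 hα).2
          exact (prod_coe_sort _ _).symm
    _ = ∏ x : β.1.1.cycleMins, ∑ c with f c = β.1.2 x, p c := (prod_univ_sum _ _).symm
    _ = _ := prod_coe_sort β.1.1.cycleMins fun x => ∑ c with f c = β.1.2 x, p c

end ColoredPerm

theorem Gfun_comp {k m n : ℕ} (w : Equiv.Perm (Fin k)) {f : Fin m → Fin n} (hf : Monotone f)
    (p : Fin m → ℤ) (q : Fin n → ℤ) :
    Gfun k m w p (q ∘ f) = Gfun k n w (fun j => ∑ c with f c = j, p c) q := by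
  simp only [Gfun, ColoredPerm.prod_pow_kappaC]
  calc ∑ α : ColoredPerm k m, α.weight p * (cmul α w).weight (q ∘ f)
      = ∑ β : ColoredPerm k n, ∑ α : ColoredPerm k m with α.recolor f = β,
          α.weight p * (cmul β w).weight q := by
        rw [← sum_fiberwise univ (ColoredPerm.recolor f)]
        refine sum_congr rfl fun β _ => sum_congr rfl fun α hα => ?_
        rw [← (mem_filter.1 hα).2, ← ColoredPerm.recolor_cmul hf, ColoredPerm.weight_recolor]
    _ = _ := by simp_rw [← sum_mul, ColoredPerm.sum_weight_recolor_eq]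

/-- Colors are `0`-based: the merged colors are `i` and `i + 1`. -/
theorem stmt4 (k m' : ℕ)
    (w : Equiv.Perm (Fin k))
    (i : ℕ) (hi : i < m') (p q : Fin (m' + 1) → ℤ)
    (hq : q ⟨i + 1, by omega⟩ = q ⟨i, by omega⟩) :
    Gfun k (m' + 1) w p q =
      Gfun k m' w
        (fun j => if j.val < i then p j.castSucc
          else if j.val = i then p j.castSucc + p j.succ else p j.succ)
        (fun j => if j.val ≤ i then q j.castSucc else q j.succ) := by
  convert Gfun_comp w (Fin.predAbove_right_monotone ⟨i, hi⟩) p _ using 2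
  · exact (Fin.comp_predAbove_eq ⟨i, hi⟩ q hq).symm
  · exact funext fun j => (Fin.sum_filter_predAbove_eq ⟨i, hi⟩ j p).symm
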